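/- arXiv:1504.00127 — 4 statements merged into one kernel-verified Lean document; each statement's English description precedes it below -/
import Mathlib

section
/- Let Ω ⊆ ℝ^d be a domain (nonempty open connected set) with boundary Γ, let A be a bounded nonempty subset of Γ, and let μ be a regular Borel measure supported on A. If there exist a, R > 0 and s ∈ (0,d) such that μ(A ∩ B(x;r)) ≥ a·r^s for all x ∈ A and all r ∈ (0,R), then there exists c > 0 such that |A_r| ≤ c·r^{d−s} for all r ∈ (0,R). -/
/-!
Take a maximal `r`-separated subset `C` of `A`. The balls of radius `r / 2` around the points
of `C` are disjoint and each carries `μ`-mass at least `a (r / 2) ^ s`, so `C` has at most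
`2 ^ s μ(ℝ^d) / (a r ^ s)` points. By maximality the balls of radius `2 r` around the points of
`C` cover the `r`-neighbourhood of `A`, and each has volume a constant times `r ^ d`.
-/

open MeasureTheory Metric Set
open scoped ENNReal NNReal

noncomputable section

/-- Euclidean space ℝ^d. -/
abbrev Euc (d : ℕ) : Type := EuclideanSpace ℝ (Fin d)


/-- The inner `r`-neighbourhood `A_r = {x ∈ closure Ω : d_A(x) < r}`. -/
def innNbhd (d : ℕ) (Ω A : Set (Euc d)) (r : ℝ) : Set (Euc d) :=
  {x ∈ closure Ω | infDist x A < r}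

namespace Metric

section PseudoMetricSpace

variable {X : Type*} [PseudoMetricSpace X]

theorem packingNumber_ne_top_of_totallyBounded {A : Set X} (hA : TotallyBounded A) {ε : ℝ≥0}
    (hε : ε ≠ 0) : packingNumber ε A ≠ ⊤ := by
  obtain ⟨N, -, hNfin, hN⟩ := exists_finite_isCover_of_totallyBounded (ε := ε / 2) (by simpa) hA
  refine ne_top_of_le_ne_top hNfin.encard_lt_top.ne ?_
  calc packingNumber ε A = packingNumber (2 * (ε / 2)) A := by rw [mul_div_cancel₀ _ two_ne_zero]
    _ ≤ externalCoveringNumber (ε / 2) A := packingNumber_two_mul_le_externalCoveringNumber _ _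
    _ ≤ N.encard := hN.externalCoveringNumber_le_encard

theorem _root_.TotallyBounded.exists_finite_isSeparated_isCover {A : Set X}
    (hA : TotallyBounded A) {ε : ℝ≥0} (hε : ε ≠ 0) :
    ∃ C ⊆ A, C.Finite ∧ IsSeparated ε C ∧ IsCover ε A C := by
  have hfin := packingNumber_ne_top_of_totallyBounded hA hε
  refine ⟨maximalSeparatedSet ε A, maximalSeparatedSet_subset, ?_,
    isSeparated_maximalSeparatedSet, isCover_maximalSeparatedSet hfin⟩
  rw [← Set.encard_ne_top_iff, encard_maximalSeparatedSet hfin]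
  exact hfin

theorem IsSeparated.pairwiseDisjoint_ball {C : Set X} {ε : ℝ≥0} (hC : IsSeparated ε C) :
    C.PairwiseDisjoint fun c ↦ ball c (ε / 2) := by
  intro c₁ hc₁ c₂ hc₂ hne
  refine Set.disjoint_left.2 fun z hz₁ hz₂ ↦ ?_
  have hlt : dist c₁ c₂ < ε := by
    calc dist c₁ c₂ ≤ dist z c₁ + dist z c₂ := dist_triangle_left _ _ _
      _ < ε / 2 + ε / 2 := add_lt_add hz₁ hz₂
      _ = ε := add_halves _
  exact (hC hc₁ hc₂ hne).not_gt (edist_lt_coe.2 (by rwa [← NNReal.coe_lt_coe, coe_nndist]))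

theorem IsCover.thickening_subset_biUnion_ball {A C : Set X} {ε : ℝ≥0} (hC : IsCover ε A C)
    (δ : ℝ) : thickening δ A ⊆ ⋃ c ∈ C, ball c (δ + ε) := by
  intro x hx
  obtain ⟨y, hyA, hxy⟩ := mem_thickening_iff.1 hx
  obtain ⟨c, hcC, hyc⟩ := hC hyA
  refine mem_iUnion₂.2 ⟨c, hcC, ?_⟩
  calc dist x c ≤ dist x y + dist y c := dist_triangle _ _ _
    _ < δ + ε := add_lt_add_of_lt_of_le hxy (by simpa [edist_dist] using hyc)

end PseudoMetricSpace

end Metric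

section Measure

variable {X : Type*} [PseudoMetricSpace X] [MeasurableSpace X] [OpensMeasurableSpace X]

theorem card_mul_le_measure_univ_of_isSeparated (μ : Measure X) {C : Finset X} {ε : ℝ≥0}
    (hC : IsSeparated ε (C : Set X)) {m : ℝ≥0∞} (hm : ∀ c ∈ C, m ≤ μ (ball c (ε / 2))) :
    C.card * m ≤ μ univ :=
  calc (C.card : ℝ≥0∞) * m = ∑ _c ∈ C, m := by rw [Finset.sum_const, nsmul_eq_mul]
    _ ≤ ∑ c ∈ C, μ (ball c (ε / 2)) := Finset.sum_le_sum hm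
    _ = μ (⋃ c ∈ C, ball c (ε / 2)) :=
      (measure_biUnion_finset hC.pairwiseDisjoint_ball fun _ _ ↦ measurableSet_ball).symm
    _ ≤ μ univ := measure_mono (subset_univ _)

theorem measure_thickening_mul_le (μ ν : Measure X) {A : Set X} (hA : TotallyBounded A)
    {r : ℝ} (hr : 0 < r) {m V : ℝ≥0∞} (hm : ∀ x ∈ A, m ≤ μ (ball x (r / 2)))
    (hV : ∀ x, ν (ball x (2 * r)) ≤ V) :
    ν (thickening r A) * m ≤ μ univ * V := by
  lift r to ℝ≥0 using hr.le
  obtain ⟨C, hCA, hCfin, hCsep, hCcov⟩ :=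
    hA.exists_finite_isSeparated_isCover (ε := r) (by exact_mod_cast hr.ne')
  set F := hCfin.toFinset
  have hcover : ν (thickening r A) ≤ F.card * V :=
    calc ν (thickening r A) ≤ ν (⋃ c ∈ F, ball c (2 * r)) := by
          refine measure_mono ((hCcov.thickening_subset_biUnion_ball r).trans ?_)
          simp only [F, Set.Finite.mem_toFinset, two_mul, subset_refl]
      _ ≤ ∑ c ∈ F, ν (ball c (2 * r)) := measure_biUnion_finset_le F _
      _ ≤ ∑ _c ∈ F, V := Finset.sum_le_sum fun c _ ↦ hV c
      _ = F.card * V := by rw [Finset.sum_const, nsmul_eq_mul]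
  have hpack : F.card * m ≤ μ univ :=
    card_mul_le_measure_univ_of_isSeparated μ (by simpa [F] using hCsep)
      fun c hc ↦ hm c (hCA (hCfin.mem_toFinset.1 hc))
  calc ν (thickening r A) * m ≤ F.card * V * m := by gcongr
    _ = F.card * m * V := mul_right_comm _ _ _
    _ ≤ μ univ * V := by gcongr

end Measure

section AddHaar

open Module

variable {E : Type*} [NormedAddCommGroup E] [NormedSpace ℝ E] [MeasurableSpace E] [BorelSpace E]
  [FiniteDimensional ℝ E]

theorem exists_addHaar_thickening_le_rpow (vol : Measure E) [vol.IsAddHaarMeasure]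
    (μ : Measure E) [IsFiniteMeasure μ] {A : Set E} (hA : Bornology.IsBounded A) {a R s : ℝ}
    (ha : 0 < a) (hlow : ∀ x ∈ A, ∀ r : ℝ, 0 < r → r < R →
      ENNReal.ofReal (a * r ^ s) ≤ μ (ball x r)) :
    ∃ c > (0 : ℝ), ∀ r : ℝ, 0 < r → r < R →
      vol (thickening r A) ≤ ENNReal.ofReal (c * r ^ ((finrank ℝ E : ℝ) - s)) := by
  set d := finrank ℝ E
  set M := (μ univ).toReal
  set V := (vol (ball 0 1)).toReal
  set c := M * V * 2 ^ d * 2 ^ s / a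
  refine ⟨c + 1, by positivity, fun r hr hrR ↦ ?_⟩
  have hmass : 0 < a * (r / 2) ^ s := by positivity
  have hball : ∀ x, vol (ball x (2 * r)) ≤ ENNReal.ofReal ((2 * r) ^ d * V) := fun x ↦ by
    rw [Measure.addHaar_ball_of_pos vol x (by positivity), ENNReal.ofReal_mul (by positivity),
      ENNReal.ofReal_pow (by positivity), ENNReal.ofReal_toReal measure_ball_lt_top.ne]
  have key := measure_thickening_mul_le μ vol (hA.isCompact_closure.totallyBounded.subset
    subset_closure) hr (fun x hx ↦ hlow x hx (r / 2) (by positivity) (by linarith)) hball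
  rw [← ENNReal.le_div_iff_mul_le (by simp [hmass]) (by simp), ← ENNReal.ofReal_toReal
    (measure_ne_top μ univ), ← ENNReal.ofReal_mul ENNReal.toReal_nonneg,
    ← ENNReal.ofReal_div_of_pos hmass] at key
  refine key.trans (ENNReal.ofReal_le_ofReal ?_)
  have hscale : M * ((2 * r) ^ d * V) / (a * (r / 2) ^ s) = c * r ^ ((d : ℝ) - s) := by
    rw [Real.div_rpow hr.le zero_le_two, Real.rpow_sub hr, Real.rpow_natCast, mul_pow]
    simp only [c]
    field_simp
  rw [hscale]
  gcongr
  linarith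

end AddHaar

theorem stmt_0_general (d : ℕ) (Ω : Set (Euc d))
    (A : Set (Euc d)) (hAne : A.Nonempty)
    (hAbd : Bornology.IsBounded A)
    (μ : Measure (Euc d)) (hμreg : μ.Regular) (hμsupp : μ Aᶜ = 0)
    (a R s : ℝ) (ha : 0 < a)
    (hlow : ∀ x ∈ A, ∀ r : ℝ, 0 < r → r < R →
      ENNReal.ofReal (a * r ^ s) ≤ μ (A ∩ ball x r)) :
    ∃ c > (0 : ℝ), ∀ r : ℝ, 0 < r → r < R →
      volume (innNbhd d Ω A r) ≤ ENNReal.ofReal (c * r ^ ((d : ℝ) - s)) := by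
  have : IsFiniteMeasure μ := ⟨calc
    μ univ = μ A := measure_congr (ae_eq_univ.2 hμsupp).symm
    _ ≤ μ (closure A) := measure_mono subset_closure
    _ < ⊤ := hAbd.isCompact_closure.measure_lt_top⟩ -- a regular measure is finite on compacts
  obtain ⟨c, hc, hbound⟩ := exists_addHaar_thickening_le_rpow volume μ hAbd ha
    fun x hx r hr hrR ↦ (hlow x hx r hr hrR).trans (measure_mono inter_subset_right)
  refine ⟨c, hc, fun r hr hrR ↦ ?_⟩
  have hsub : innNbhd d Ω A r ⊆ thickening r A :=
    fun x hx ↦ (mem_thickening_iff_infDist_lt hAne).2 hx.2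
  simpa only [finrank_euclideanSpace_fin] using (measure_mono hsub).trans (hbound r hr hrR)

/-- Lemma 2.2(I): a lower Ahlfors-type mass bound for a measure supported on a bounded
nonempty subset `A` of the boundary of a domain `Ω` yields the upper volume bound
`|A_r| ≤ c · r^(d-s)` for the inner neighbourhoods of `A`. -/
theorem stmt_0 (d : ℕ) (Ω : Set (Euc d)) (hΩopen : IsOpen Ω) (hΩconn : IsConnected Ω)
    (A : Set (Euc d)) (hAΓ : A ⊆ frontier Ω) (hAne : A.Nonempty)
    (hAbd : Bornology.IsBounded A)
    (μ : Measure (Euc d)) (hμreg : μ.Regular) (hμsupp : μ Aᶜ = 0)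
    (a R s : ℝ) (ha : 0 < a) (hR : 0 < R) (hs0 : 0 < s) (hsd : s < d)
    (hlow : ∀ x ∈ A, ∀ r : ℝ, 0 < r → r < R →
      ENNReal.ofReal (a * r ^ s) ≤ μ (A ∩ ball x r)) :
    ∃ c > (0 : ℝ), ∀ r : ℝ, 0 < r → r < R →
      volume (innNbhd d Ω A r) ≤ ENNReal.ofReal (c * r ^ ((d : ℝ) - s)) :=
  stmt_0_general d Ω A hAne hAbd μ hμreg hμsupp a R s ha hlow
end
end

section
/- Let Ω ⊆ ℝ^d be a domain whose boundary Γ is Ahlfors s-regular with s ∈ (0, d−1). Then for every z ∈ Γ and R > 0, the set A = Γ ∩ B(z;R) satisfies: there exist c', R' > 0 such that |A_r| ≥ c'·r^{d−s} for all r ∈ (0,R'). -/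
open MeasureTheory Metric Set
open scoped ENNReal NNReal

noncomputable section

/-- The boundary set `Γ` is (locally uniformly) Ahlfors `s`-regular. -/
def AhlforsRegular (d : ℕ) (Γ : Set (Euc d)) (s : ℝ) : Prop :=
  ∃ μ : Measure (Euc d), μ.Regular ∧ μ Γᶜ = 0 ∧
    ∀ x₀ ∈ Γ, ∀ R₀ : ℝ, 0 < R₀ → ∃ c > (0 : ℝ),
      ∀ x ∈ Γ ∩ ball x₀ R₀, ∀ r : ℝ, 0 < r → r < 2 * R₀ →
        ENNReal.ofReal (c⁻¹ * r ^ s) ≤ μ (Γ ∩ ball x₀ R₀ ∩ ball x r) ∧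
        μ (Γ ∩ ball x₀ R₀ ∩ ball x r) ≤ ENNReal.ofReal (c * r ^ s)

/-!
By packing, Ahlfors regularity bounds the covering numbers of `Γ` by `O(t^{-s})`. Seen from a point
`a ∈ Ω`, the *shadow* of a piece of `Γ` (the points `y` whose segment `[a, y]` meets it) is then
covered at scale `t` by `O(t^{-s})` boundary balls times `O(1/t)` radial steps, i.e. by
`O(t^{-s-1})` balls of radius `O(t)`; as `d - 1 - s > 0` it is Lebesgue-null. Every point of a
ball `U` around a boundary point that is not in `Ω` lies in such a shadow, so `Ω` has full measure
in `U`.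
Now a maximal `r/2`-separated set in `Γ ∩ B(z, R/2)` has `≳ r^{-s}` points by Ahlfors regularity,
and the disjoint balls of radius `r/4` around them lie in `A_r` up to null sets, whence
`|A_r| ≳ r^{-s} · r^d`.
-/

open Bornology Filter Topology Module

theorem IsPreconnected.inter_frontier_nonempty {X : Type*} [TopologicalSpace X] {s t : Set X}
    (hs : IsPreconnected s) (hst : (s ∩ t).Nonempty) (hst' : (s \ t).Nonempty) :
    (s ∩ frontier t).Nonempty := by
  by_contra! h
  have hint : ∀ x ∈ s, x ∈ closure t → x ∈ interior t := fun x hx hxt ↦ by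
    by_contra hxi
    exact h.subset ⟨hx, hxt, hxi⟩
  obtain ⟨x, hxs, hxt⟩ := hst
  have hs_int : s ⊆ interior t :=
    hs.subset_left_of_subset_union isOpen_interior isClosed_closure.isOpen_compl
      (disjoint_compl_right.mono_left interior_subset_closure)
      (fun y hy ↦ (em (y ∈ closure t)).imp (hint y hy) id) ⟨x, hxs, hint x hxs (subset_closure hxt)⟩
  obtain ⟨y, hys, hyt⟩ := hst'
  exact hyt (interior_subset (hs_int hys))

theorem exists_finset_pairwise_lt_dist_subset_biUnion_closedBall {X : Type*}
    [PseudoMetricSpace X] [ProperSpace X] {A : Set X} (hA : IsBounded A) {ε : ℝ} (hε : 0 < ε) :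
    ∃ F : Finset X, ↑F ⊆ A ∧ (F : Set X).Pairwise (fun x y ↦ ε < dist x y) ∧
      A ⊆ ⋃ x ∈ F, closedBall x ε := by
  have hpack : packingNumber ε.toNNReal A ≠ ⊤ := by
    obtain ⟨N, -, hNfin, hN⟩ := exists_finite_isCover_of_isCompact_closure
      (ε := ε.toNNReal / 2) (by simpa using hε) hA.isCompact_closure
    refine ne_top_of_le_ne_top hNfin.encard_lt_top.ne ?_
    calc packingNumber ε.toNNReal A = packingNumber (2 * (ε.toNNReal / 2)) A := by
          rw [mul_div_cancel₀ _ two_ne_zero]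
      _ ≤ externalCoveringNumber (ε.toNNReal / 2) A :=
          packingNumber_two_mul_le_externalCoveringNumber _ _
      _ ≤ N.encard := hN.externalCoveringNumber_le_encard
  have hfin : (maximalSeparatedSet ε.toNNReal A).Finite :=
    Set.encard_ne_top_iff.mp (by rwa [encard_maximalSeparatedSet hpack])
  refine ⟨hfin.toFinset, by simpa using maximalSeparatedSet_subset, ?_, ?_⟩
  · intro x hx y hy hxy
    have : (ε.toNNReal : ℝ≥0∞) < edist x y := isSeparated_maximalSeparatedSet
      (by simpa using hx) (by simpa using hy) hxy
    rw [edist_dist] at this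
    exact (ENNReal.ofReal_lt_ofReal_iff_of_nonneg hε.le).1 this
  · have := isCover_iff_subset_iUnion_closedBall.mp (isCover_maximalSeparatedSet hpack)
    simpa [Real.coe_toNNReal _ hε.le] using this

section Measure

variable {X : Type*} [MeasurableSpace X] (μ : Measure X)

theorem card_mul_le_measure_of_pairwiseDisjoint {ι : Type*} {F : Finset ι} {U : ι → Set X}
    {T : Set X} {m : ℝ≥0∞} (hU : ∀ i ∈ F, MeasurableSet (U i))
    (hdisj : (F : Set ι).PairwiseDisjoint U) (hUT : ∀ i ∈ F, U i ⊆ T)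
    (hm : ∀ i ∈ F, m ≤ μ (U i)) : F.card * m ≤ μ T :=
  calc F.card * m = ∑ _i ∈ F, m := by rw [Finset.sum_const, nsmul_eq_mul]
    _ ≤ ∑ i ∈ F, μ (U i) := Finset.sum_le_sum hm
    _ = μ (⋃ i ∈ F, U i) := (measure_biUnion_finset hdisj hU).symm
    _ ≤ μ T := measure_mono (iUnion₂_subset hUT)

theorem measure_le_card_mul_of_subset_biUnion {ι : Type*} {F : Finset ι} {U : ι → Set X}
    {A : Set X} {m : ℝ≥0∞} (hA : A ⊆ ⋃ i ∈ F, U i) (hm : ∀ i ∈ F, μ (U i) ≤ m) :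
    μ A ≤ F.card * m :=
  calc μ A ≤ ∑ i ∈ F, μ (U i) := (measure_mono hA).trans (measure_biUnion_finset_le F U)
    _ ≤ ∑ _i ∈ F, m := Finset.sum_le_sum hm
    _ = F.card * m := by rw [Finset.sum_const, nsmul_eq_mul]

theorem measure_eq_zero_of_forall_le_rpow {S : Set X} {C e t₀ : ℝ} (he : 0 < e) (ht₀ : 0 < t₀)
    (hS : ∀ t, 0 < t → t < t₀ → μ S ≤ ENNReal.ofReal (C * t ^ e)) : μ S = 0 := by
  have hlim : Tendsto (fun t : ℝ ↦ ENNReal.ofReal (C * t ^ e)) (𝓝[>] 0) (𝓝 0) := by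
    have hcont : Continuous (fun t : ℝ ↦ ENNReal.ofReal (C * t ^ e)) :=
      ENNReal.continuous_ofReal.comp (continuous_const.mul (Real.continuous_rpow_const he.le))
    simpa [Real.zero_rpow he.ne'] using hcont.tendsto 0 |>.mono_left nhdsWithin_le_nhds
  refine le_antisymm (ge_of_tendsto hlim ?_) bot_le
  filter_upwards [Ioo_mem_nhdsGT ht₀] with t ht using hS t ht.1 ht.2

end Measure

section CoveringBound

variable {X : Type*} [PseudoMetricSpace X]

/-- A uniform version of `dim_B K ≤ s`: the covering numbers satisfy `N(K, t) = O(t^{-s})`. -/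
def HasCoveringBound (K : Set X) (s : ℝ) : Prop :=
  ∃ C t₀ : ℝ, 0 < t₀ ∧ ∀ t, 0 < t → t < t₀ →
    ∃ F : Finset X, K ⊆ ⋃ x ∈ F, closedBall x t ∧ (F.card : ℝ) ≤ C * t ^ (-s)

theorem HasCoveringBound.mono {K L : Set X} {s : ℝ} (hL : HasCoveringBound L s) (hKL : K ⊆ L) :
    HasCoveringBound K s := by
  obtain ⟨C, t₀, ht₀, hcov⟩ := hL
  refine ⟨C, t₀, ht₀, fun t ht htt₀ ↦ ?_⟩
  obtain ⟨F, hLF, hF⟩ := hcov t ht htt₀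
  exact ⟨F, hKL.trans hLF, hF⟩

theorem HasCoveringBound.isBounded {K : Set X} {s : ℝ} (hK : HasCoveringBound K s) :
    IsBounded K := by
  obtain ⟨C, t₀, ht₀, hcov⟩ := hK
  obtain ⟨F, hKF, -⟩ := hcov (t₀ / 2) (half_pos ht₀) (half_lt_self ht₀)
  exact ((isBounded_biUnion_finset F).2 fun x _ ↦ isBounded_closedBall).subset hKF

theorem hasCoveringBound_of_le_measure_inter_ball [ProperSpace X] [MeasurableSpace X]
    [OpensMeasurableSpace X] {μ : Measure X} {A : Set X} (hAb : IsBounded A)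
    (hAm : MeasurableSet A) (hμA : μ A ≠ ∞) {c s t₀ : ℝ} (hc : 0 < c) (ht₀ : 0 < t₀)
    (hlow : ∀ x ∈ A, ∀ r, 0 < r → r < t₀ → ENNReal.ofReal (c * r ^ s) ≤ μ (A ∩ ball x r)) :
    HasCoveringBound A s := by
  refine ⟨(μ A).toReal * 2 ^ s / c, t₀, ht₀, fun t ht htt₀ ↦ ?_⟩
  obtain ⟨F, hFA, hFsep, hAF⟩ := exists_finset_pairwise_lt_dist_subset_biUnion_closedBall hAb ht
  refine ⟨F, hAF, ?_⟩
  have hpacking : F.card * ENNReal.ofReal (c * (t / 2) ^ s) ≤ μ A :=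
    card_mul_le_measure_of_pairwiseDisjoint μ (fun x _ ↦ hAm.inter measurableSet_ball)
      (fun x hx y hy hxy ↦ (ball_disjoint_ball (by linarith [hFsep hx hy hxy])).mono
        inter_subset_right inter_subset_right)
      (fun x _ ↦ inter_subset_left)
      (fun x hx ↦ hlow x (hFA hx) (t / 2) (half_pos ht) (by linarith))
  have hpos : 0 < c * (t / 2) ^ s := by positivity
  have hreal : F.card * (c * (t / 2) ^ s) ≤ (μ A).toReal := by
    simpa [ENNReal.toReal_mul, hpos.le] using ENNReal.toReal_mono hμA hpacking
  calc (F.card : ℝ) ≤ (μ A).toReal / (c * (t / 2) ^ s) := (le_div_iff₀ hpos).2 hreal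
    _ = (μ A).toReal * 2 ^ s / c * t ^ (-s) := by
        rw [Real.div_rpow ht.le zero_le_two, Real.rpow_neg ht.le]
        field_simp

end CoveringBound

section Ahlfors

variable {X : Type*} [PseudoMetricSpace X] [MeasurableSpace X]

/-- The two-sided bounds that `AhlforsRegular` provides on `A = Γ ∩ B(x₀, R₀)`. -/
def AhlforsBoundsOn (μ : Measure X) (A : Set X) (s c R : ℝ) : Prop :=
  ∀ x ∈ A, ∀ r : ℝ, 0 < r → r < 2 * R →
    ENNReal.ofReal (c⁻¹ * r ^ s) ≤ μ (A ∩ ball x r) ∧ μ (A ∩ ball x r) ≤ ENNReal.ofReal (c * r ^ s)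

variable {μ : Measure X} {A : Set X} {s c R : ℝ}

theorem AhlforsBoundsOn.hasCoveringBound [ProperSpace X] [OpensMeasurableSpace X]
    (hA : AhlforsBoundsOn μ A s c R) {z : X} (hz : z ∈ A) (hAz : A ⊆ ball z R)
    (hAm : MeasurableSet A) (hc : 0 < c) : HasCoveringBound A s := by
  have hR : 0 < R := pos_of_mem_ball (hAz hz)
  have hμA : μ A ≤ ENNReal.ofReal (c * R ^ s) := by
    simpa [inter_eq_left.2 hAz] using (hA z hz R hR (by linarith)).2
  exact hasCoveringBound_of_le_measure_inter_ball (isBounded_ball.subset hAz) hAm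
    (ne_top_of_le_ne_top ENNReal.ofReal_ne_top hμA) (inv_pos.2 hc) (by positivity : 0 < 2 * R)
    fun x hx r hr hrR ↦ (hA x hx r hr hrR).1

theorem AhlforsBoundsOn.le_card_mul (hA : AhlforsBoundsOn μ A s c R) (hc : 0 < c) {z : X}
    (hz : z ∈ A) {ρ ε r : ℝ} (hρ : 0 < ρ) (hρR : ρ < 2 * R) (hr : 0 < r) (hεr : ε < r)
    (hrR : r < 2 * R) {F : Finset X} (hFA : ↑F ⊆ A)
    (hF : A ∩ ball z ρ ⊆ ⋃ x ∈ F, closedBall x ε) :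
    c⁻¹ * ρ ^ s ≤ F.card * (c * r ^ s) := by
  have hcount : ENNReal.ofReal (c⁻¹ * ρ ^ s) ≤ F.card * ENNReal.ofReal (c * r ^ s) :=
    calc ENNReal.ofReal (c⁻¹ * ρ ^ s) ≤ μ (A ∩ ball z ρ) := (hA z hz ρ hρ hρR).1
      _ ≤ F.card * ENNReal.ofReal (c * r ^ s) :=
          measure_le_card_mul_of_subset_biUnion μ (U := fun x ↦ A ∩ ball x r)
            (fun y hy ↦ by
              obtain ⟨x, hxF, hyx⟩ := mem_iUnion₂.1 (hF hy)
              exact mem_iUnion₂.2 ⟨x, hxF, hy.1, closedBall_subset_ball hεr hyx⟩)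
            fun x hx ↦ (hA x (hFA hx) r hr hrR).2
  rwa [← ENNReal.ofReal_natCast, ← ENNReal.ofReal_mul (by positivity),
    ENNReal.ofReal_le_ofReal_iff (by positivity)] at hcount

end Ahlfors

section Shadow

variable {E : Type*} [NormedAddCommGroup E] [NormedSpace ℝ E]

def shadow (a : E) (K : Set E) : Set E :=
  {y | ∃ g ∈ K, g ∈ segment ℝ a y}

theorem exists_eq_add_smul_of_mem_shadow {a y : E} {K : Set E} {δ M : ℝ} (hδ : 0 < δ)
    (hKa : ∀ g ∈ K, δ ≤ dist a g) (hy : y ∈ ball a M ∩ shadow a K) :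
    ∃ g ∈ K, ∃ τ ∈ Icc 1 (M / δ), y = a + τ • (g - a) := by
  obtain ⟨hyM, g, hgK, hg⟩ := hy
  rw [segment_eq_image'] at hg
  obtain ⟨u, ⟨hu0, hu1⟩, rfl⟩ := hg
  have hdist : dist a (a + u • (y - a)) = u * ‖y - a‖ := by
    rw [dist_self_add_right, norm_smul, Real.norm_of_nonneg hu0]
  have hδu := hKa _ hgK
  rw [hdist] at hδu
  have hu : 0 < u := pos_of_mul_pos_left (hδ.trans_le hδu) (norm_nonneg _)
  refine ⟨_, hgK, u⁻¹, ⟨one_le_inv₀ hu |>.2 hu1, ?_⟩, ?_⟩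
  · rw [mem_ball, dist_eq_norm] at hyM
    rw [le_div_iff₀ hδ, inv_mul_le_iff₀ hu]
    nlinarith
  · rw [add_sub_cancel_left, smul_smul, inv_mul_cancel₀ hu.ne', one_smul, add_sub_cancel]

theorem exists_lt_add_smul_mem_closedBall {a g x : E} {t τ T D : ℝ} (ht : 0 < t)
    (hgx : dist g x ≤ t) (hxa : dist x a ≤ D) (hτ : τ ∈ Icc 1 T) :
    ∃ k < ⌊T / t⌋₊ + 1,
      a + τ • (g - a) ∈ closedBall (a + (1 + k * t) • (x - a)) ((T + D) * t) := by
  obtain ⟨hτ1, hτT⟩ := hτ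
  have hq : 0 ≤ (τ - 1) / t := div_nonneg (by linarith) ht.le
  set k := ⌊(τ - 1) / t⌋₊
  have hk : k * t ≤ τ - 1 := (le_div_iff₀ ht).1 (Nat.floor_le hq)
  have hk' : τ - 1 < (k + 1) * t := (div_lt_iff₀ ht).1 (Nat.lt_floor_add_one _)
  refine ⟨k, Nat.lt_succ_of_le (Nat.floor_le_floor (by gcongr; linarith)), ?_⟩
  have hdecomp : a + τ • (g - a) - (a + (1 + k * t) • (x - a))
      = τ • (g - x) + (τ - (1 + k * t)) • (x - a) := by module
  rw [mem_closedBall, dist_eq_norm, hdecomp]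
  rw [dist_eq_norm] at hgx hxa
  calc ‖τ • (g - x) + (τ - (1 + k * t)) • (x - a)‖
      ≤ τ * ‖g - x‖ + (τ - (1 + k * t)) * ‖x - a‖ := by
        refine (norm_add_le _ _).trans_eq ?_
        rw [norm_smul, norm_smul, Real.norm_of_nonneg (by linarith),
          Real.norm_of_nonneg (by linarith)]
    _ ≤ T * t + t * D := by
        gcongr
        · linarith
        · linarith
    _ = (T + D) * t := by ring

theorem ball_inter_shadow_subset_biUnion_closedBall {a : E} {K : Set E} {F : Finset E}
    {δ D M t : ℝ} (hδ : 0 < δ) (hKa : ∀ g ∈ K, δ ≤ dist a g) (hKD : ∀ g ∈ K, dist g a ≤ D)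
    (ht : 0 < t) (ht1 : t ≤ 1) (hKF : K ⊆ ⋃ x ∈ F, closedBall x t) :
    ball a M ∩ shadow a K ⊆ ⋃ p ∈ F ×ˢ Finset.range (⌊M / δ / t⌋₊ + 1),
      closedBall (a + (1 + p.2 * t) • (p.1 - a)) ((M / δ + (D + 1)) * t) := by
  intro y hy
  obtain ⟨g, hgK, τ, hτ, rfl⟩ := exists_eq_add_smul_of_mem_shadow hδ hKa hy
  obtain ⟨x, hxF, hgx⟩ := mem_iUnion₂.1 (hKF hgK)
  have hxa : dist x a ≤ D + 1 := by
    linarith [dist_triangle x g a, dist_comm x g, mem_closedBall.1 hgx, hKD g hgK]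
  obtain ⟨k, hk, hmem⟩ := exists_lt_add_smul_mem_closedBall ht hgx hxa hτ
  exact mem_iUnion₂.2 ⟨(x, k), Finset.mem_product.2 ⟨hxF, Finset.mem_range.2 hk⟩, hmem⟩

variable [FiniteDimensional ℝ E] [MeasurableSpace E] [BorelSpace E]
  (μ : Measure E) [μ.IsAddHaarMeasure]

theorem measure_ball_inter_shadow_le {a : E} {K : Set E} {F : Finset E} {s C δ D M t : ℝ}
    (hδ : 0 < δ) (hKa : ∀ g ∈ K, δ ≤ dist a g) (hKD : ∀ g ∈ K, dist g a ≤ D) (hD : 0 ≤ D)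
    (hM : 0 ≤ M) (ht : 0 < t) (ht1 : t ≤ 1) (hKF : K ⊆ ⋃ x ∈ F, closedBall x t)
    (hF : (F.card : ℝ) ≤ C * t ^ (-s)) :
    μ (ball a M ∩ shadow a K) ≤ ENNReal.ofReal (C * (M / δ + 1) * (M / δ + (D + 1)) ^ finrank ℝ E *
      μ.real (ball 0 1) * t ^ ((finrank ℝ E : ℝ) - 1 - s)) := by
  set d := finrank ℝ E
  set ω := μ.real (ball 0 1)
  set T := M / δ
  have hclosedBall : ∀ c r, 0 ≤ r → μ (closedBall c r) = ENNReal.ofReal (r ^ d * ω) := by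
    intro c r hr
    rw [Measure.addHaar_closedBall μ c hr, ENNReal.ofReal_mul (by positivity), ofReal_measureReal]
  have hK : (⌊T / t⌋₊ : ℝ) + 1 ≤ (T + 1) / t := by
    rw [add_div]
    gcongr
    · exact Nat.floor_le (by positivity)
    · exact one_le_one_div ht ht1
  have hpow : t ^ (-s) * ((T + 1) / t) * ((T + (D + 1)) * t) ^ d
      = (T + 1) * (T + (D + 1)) ^ d * t ^ ((d : ℝ) - 1 - s) := by
    rw [show (d : ℝ) - 1 - s = -s + -1 + d by ring, Real.rpow_add ht, Real.rpow_add ht,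
      Real.rpow_neg_one, Real.rpow_natCast, mul_pow]
    field_simp
  calc μ (ball a M ∩ shadow a K)
      ≤ (F ×ˢ Finset.range (⌊T / t⌋₊ + 1)).card * ENNReal.ofReal (((T + (D + 1)) * t) ^ d * ω) :=
        measure_le_card_mul_of_subset_biUnion μ
          (ball_inter_shadow_subset_biUnion_closedBall hδ hKa hKD ht ht1 hKF)
          fun p _ ↦ (hclosedBall _ _ (by positivity)).le
    _ = ENNReal.ofReal (F.card * (⌊T / t⌋₊ + 1) * (((T + (D + 1)) * t) ^ d * ω)) := by
        rw [Finset.card_product, Finset.card_range, ← ENNReal.ofReal_natCast,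
          ← ENNReal.ofReal_mul (by positivity)]
        push_cast
        rfl
    _ ≤ ENNReal.ofReal (C * t ^ (-s) * ((T + 1) / t) * (((T + (D + 1)) * t) ^ d * ω)) := by
        refine ENNReal.ofReal_le_ofReal ?_
        gcongr
        exact (Nat.cast_nonneg _).trans hF
    _ = ENNReal.ofReal (C * (T + 1) * (T + (D + 1)) ^ d * ω * t ^ ((d : ℝ) - 1 - s)) := by
        congr 1
        linear_combination (C * ω) * hpow

theorem measure_shadow_eq_zero {K : Set E} {s : ℝ} (hK : HasCoveringBound K s)
    (hs : s < finrank ℝ E - 1) {a : E} (ha : a ∉ closure K) : μ (shadow a K) = 0 := by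
  obtain ⟨δ, hδ, hKa⟩ : ∃ δ > 0, ∀ g ∈ K, δ ≤ dist a g := by
    simpa [Metric.mem_closure_iff] using ha
  obtain ⟨D, hD, hKD⟩ := hK.isBounded.subset_closedBall_lt 0 a
  obtain ⟨C, t₀, ht₀, hcov⟩ := hK
  rw [← univ_inter (shadow a K), ← iUnion_ball_nat a, iUnion_inter]
  refine measure_iUnion_null fun n ↦ ?_
  apply measure_eq_zero_of_forall_le_rpow μ (e := (finrank ℝ E : ℝ) - 1 - s) (by linarith)
    (lt_min ht₀ one_pos)
  intro t ht htt
  obtain ⟨F, hKF, hF⟩ := hcov t ht (lt_min_iff.1 htt).1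
  exact measure_ball_inter_shadow_le μ hδ hKa (fun g hg ↦ mem_closedBall.1 (hKD hg)) hD.le
    n.cast_nonneg ht (lt_min_iff.1 htt).2.le hKF hF

theorem measure_diff_eq_zero_of_hasCoveringBound_frontier {Ω U : Set E} (hΩ : IsOpen Ω)
    (hU : Convex ℝ U) (hUΩ : (U ∩ Ω).Nonempty) {s : ℝ}
    (hK : HasCoveringBound (frontier Ω ∩ U) s) (hs : s < finrank ℝ E - 1) :
    μ (U \ Ω) = 0 := by
  obtain ⟨a, haU, haΩ⟩ := hUΩ
  have ha : a ∉ closure (frontier Ω ∩ U) := fun h ↦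
    (closure_minimal inter_subset_left isClosed_frontier h).2 (hΩ.interior_eq.symm ▸ haΩ)
  refine measure_mono_null (fun y ⟨hyU, hyΩ⟩ ↦ ?_) (measure_shadow_eq_zero μ hK hs ha)
  have hseg : segment ℝ a y ⊆ U := hU.segment_subset haU hyU
  obtain ⟨g, hg, hgΩ⟩ := (convex_segment a y).isPreconnected.inter_frontier_nonempty
    ⟨a, left_mem_segment ℝ a y, haΩ⟩ ⟨y, right_mem_segment ℝ a y, hyΩ⟩
  exact ⟨g, ⟨hgΩ, hseg hg⟩, hg⟩

theorem measure_inter_ball_eq_of_hasCoveringBound_frontier {Ω : Set E} (hΩ : IsOpen Ω)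
    {x : E} (hx : x ∈ frontier Ω) {ρ : ℝ} (hρ : 0 < ρ) {s : ℝ}
    (hK : HasCoveringBound (frontier Ω ∩ ball x ρ) s) (hs : s < finrank ℝ E - 1) :
    μ (Ω ∩ ball x ρ) = μ (ball x ρ) := by
  rw [inter_comm]
  refine measure_inter_conull' (measure_diff_eq_zero_of_hasCoveringBound_frontier μ hΩ
    (convex_ball x ρ) ?_ hK hs)
  obtain ⟨y, hyΩ, hy⟩ := Metric.mem_closure_iff.1 (frontier_subset_closure hx) ρ hρ
  exact ⟨y, mem_ball_comm.1 hy, hyΩ⟩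

end Shadow

theorem card_mul_le_volume_innNbhd {d : ℕ} {Ω A : Set (Euc d)} (hΩ : IsOpen Ω) {s ε r : ℝ}
    (hs : s < d - 1) (hε : 0 < ε) (hεr : ε / 2 < r) {F : Finset (Euc d)} (hFA : ↑F ⊆ A)
    (hFΓ : ↑F ⊆ frontier Ω) (hFsep : (F : Set (Euc d)).Pairwise fun x y ↦ ε < dist x y)
    (hcov : ∀ x ∈ F, HasCoveringBound (frontier Ω ∩ ball x (ε / 2)) s) :
    ENNReal.ofReal (F.card * ((ε / 2) ^ d * volume.real (ball (0 : Euc d) 1))) ≤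
      volume (innNbhd d Ω A r) := by
  rw [ENNReal.ofReal_mul (by positivity), ENNReal.ofReal_natCast]
  refine card_mul_le_measure_of_pairwiseDisjoint volume (U := fun x ↦ Ω ∩ ball x (ε / 2))
    (fun x _ ↦ hΩ.measurableSet.inter measurableSet_ball)
    (fun x hx y hy hxy ↦ (ball_disjoint_ball (by linarith [hFsep hx hy hxy])).mono
      inter_subset_right inter_subset_right)
    (fun x hx y ⟨hyΩ, hyx⟩ ↦ ⟨subset_closure hyΩ,
      (infDist_le_dist_of_mem (hFA hx)).trans_lt (by linarith [mem_ball.1 hyx])⟩)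
    fun x hx ↦ ?_
  rw [measure_inter_ball_eq_of_hasCoveringBound_frontier volume hΩ (hFΓ hx) (half_pos hε)
    (hcov x hx) (by rwa [finrank_euclideanSpace_fin]),
    Measure.addHaar_ball_of_pos _ _ (half_pos hε), finrank_euclideanSpace_fin,
    ENNReal.ofReal_mul (by positivity), ofReal_measureReal]

theorem stmt_3_general (d : ℕ) (Ω : Set (Euc d)) (hΩopen : IsOpen Ω)
    (s : ℝ) (hsd : s < (d : ℝ) - 1)
    (hreg : AhlforsRegular d (frontier Ω) s) :
    ∀ z ∈ frontier Ω, ∀ R : ℝ, 0 < R →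
      ∃ c' > (0 : ℝ), ∃ R' > (0 : ℝ), ∀ r : ℝ, 0 < r → r < R' →
        ENNReal.ofReal (c' * r ^ ((d : ℝ) - s)) ≤
          volume (innNbhd d Ω (frontier Ω ∩ ball z R) r) := by
  intro z hz R hR
  obtain ⟨μ, -, -, hAhl⟩ := hreg
  obtain ⟨c, hc, hA⟩ := hAhl z hz R hR
  have hzA : z ∈ frontier Ω ∩ ball z R := ⟨hz, mem_ball_self hR⟩
  have hcov : HasCoveringBound (frontier Ω ∩ ball z R) s :=
    AhlforsBoundsOn.hasCoveringBound hA hzA inter_subset_right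
      (isClosed_frontier.measurableSet.inter measurableSet_ball) hc
  set ω := volume.real (ball (0 : Euc d) 1)
  have hω : 0 < ω := ENNReal.toReal_pos (measure_ball_pos _ _ one_pos).ne' measure_ball_lt_top.ne
  refine ⟨c⁻¹ * c⁻¹ * (R / 2) ^ s * ω / 4 ^ d, by positivity, R / 2, half_pos hR,
    fun r hr hrR ↦ ?_⟩
  obtain ⟨F, hFA, hFsep, hFcov⟩ := exists_finset_pairwise_lt_dist_subset_biUnion_closedBall
    (isBounded_ball.subset (inter_subset_right (s := frontier Ω) (t := ball z (R / 2))))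
    (half_pos hr)
  have hFA' : ↑F ⊆ frontier Ω ∩ ball z R :=
    hFA.trans (inter_subset_inter_right _ (ball_subset_ball (by linarith)))
  have hcount : c⁻¹ * (R / 2) ^ s ≤ F.card * (c * r ^ s) :=
    AhlforsBoundsOn.le_card_mul hA hc hzA (half_pos hR) (by linarith) hr (half_lt_self hr)
      (by linarith) hFA' fun y hy ↦ hFcov ⟨hy.1.1, hy.2⟩
  have hpacking := card_mul_le_volume_innNbhd (r := r) hΩopen hsd (half_pos hr) (by linarith) hFA'
    (hFA'.trans inter_subset_left) hFsep fun x hx ↦ hcov.mono <| inter_subset_inter_right _ <|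
      ball_subset_ball' (ε₂ := R) (by linarith [mem_ball.1 (hFA hx).2])
  refine le_trans (ENNReal.ofReal_le_ofReal ?_) hpacking
  calc c⁻¹ * c⁻¹ * (R / 2) ^ s * ω / 4 ^ d * r ^ ((d : ℝ) - s)
      = c⁻¹ * (R / 2) ^ s / (c * r ^ s) * ((r / 2 / 2) ^ d * ω) := by
        rw [Real.rpow_sub hr, Real.rpow_natCast, div_div, div_pow, show (2 : ℝ) * 2 = 4 by norm_num]
        field_simp
    _ ≤ F.card * ((r / 2 / 2) ^ d * ω) := by
        gcongr
        rwa [div_le_iff₀ (by positivity)]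

/-- Proposition 2.3: if the boundary `Γ` of a domain `Ω ⊆ ℝ^d` is Ahlfors `s`-regular
with `s ∈ (0, d-1)`, then for every `z ∈ Γ` and `R > 0` the set `A = Γ ∩ B(z;R)`
satisfies `|A_r| ≥ c'·r^(d-s)` for all small `r > 0`. -/
theorem stmt_3 (d : ℕ) (Ω : Set (Euc d)) (hΩopen : IsOpen Ω) (hΩconn : IsConnected Ω)
    (s : ℝ) (hs0 : 0 < s) (hsd : s < (d : ℝ) - 1)
    (hreg : AhlforsRegular d (frontier Ω) s) :
    ∀ z ∈ frontier Ω, ∀ R : ℝ, 0 < R →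
      ∃ c' > (0 : ℝ), ∃ R' > (0 : ℝ), ∀ r : ℝ, 0 < r → r < R' →
        ENNReal.ofReal (c' * r ^ ((d : ℝ) - s)) ≤
          volume (innNbhd d Ω (frontier Ω ∩ ball z R) r) :=
  stmt_3_general d Ω hΩopen s hsd hreg
end
end

section
/- Let Ω ⊆ ℝ^d be a domain with boundary Γ, let z ∈ Γ and R > 0, and suppose that Ω_{z,R} = Ω ∩ B(z;R) is Ω-uniform with constant σ ≥ 1. Then there exist b', R' > 0 (one may take b' = |B(0;1)|·(1+2σ²)^{−d} and R' = 2σ(1+2σ²)^{−1}R) such that |Ω ∩ B(x;r)| ≥ b'·r^d for all x ∈ Γ ∩ B(z;R/2) and all r ∈ (0,R'). -/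
open MeasureTheory Metric Set
open scoped ENNReal NNReal

noncomputable section

/-- The uniformity curve condition: a rectifiable curve `γ : [0,1] → Ω` from `x` to `y`
of length at most `σ·d(x;y)` with `d_Γ(w) ≥ σ⁻¹·min(d(x;w), d(w;y))` along the curve. -/
def UniformCurve (d : ℕ) (Ω : Set (Euc d)) (σ : ℝ) (x y : Euc d) : Prop :=
  ∃ γ : ℝ → Euc d, ContinuousOn γ (Icc 0 1) ∧ γ 0 = x ∧ γ 1 = y ∧
    (∀ t ∈ Icc (0 : ℝ) 1, γ t ∈ Ω) ∧
    eVariationOn γ (Icc 0 1) ≤ ENNReal.ofReal (σ * dist x y) ∧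
    ∀ t ∈ Icc (0 : ℝ) 1,
      σ⁻¹ * min (dist x (γ t)) (dist (γ t) y) ≤ infDist (γ t) (frontier Ω)

/-- `Ω_{z,R} = Ω ∩ B(z;R)` is `Ω`-uniform with constant `σ`. -/
def OmegaUniform (d : ℕ) (Ω : Set (Euc d)) (σ : ℝ) (z : Euc d) (R : ℝ) : Prop :=
  ∀ x ∈ Ω ∩ ball z R, ∀ y ∈ Ω ∩ ball z R, UniformCurve d Ω σ x y

/-!
Fix `w₀ ∈ Ω_{z,R}` with `B(w₀;ρ₀) ⊆ Ω`; every boundary point is at distance `≥ ρ₀` from `w₀`.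
For `x ∈ Γ ∩ B(z;R/2)` and `r < min R ρ₀`, pick `p ∈ Ω` with `d(x;p) < r/4` and follow a uniform
curve from `p` to `w₀` until the point `w` with `d(p;w) = r/4`. Since `d(p;w₀) ≥ r/2`, also
`d(w;w₀) ≥ r/4`, so the cone condition gives `d_Γ(w) ≥ r/(4σ)`; the ball `B(w; r/(4σ))` lies in
`Ω ∩ B(x;r)`, whence `|Ω ∩ B(x;r)| ≥ |B(0;1)|·(4σ)^{-d}·r^d`.
-/

theorem ball_subset_of_le_infDist_frontier {E : Type*} [NormedAddCommGroup E]
    [NormedSpace ℝ E] [FiniteDimensional ℝ E] {Ω : Set E} {w : E} (hw : w ∈ Ω) {ρ : ℝ}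
    (hρ : ρ ≤ infDist w (frontier Ω)) : ball w ρ ⊆ Ω := by
  rcases eq_or_ne Ω univ with rfl | hΩ
  · exact subset_univ _
  obtain ⟨y, hy, hdist⟩ := exists_mem_frontier_infDist_compl_eq_dist hw hΩ
  calc ball w ρ ⊆ ball w (infDist w Ωᶜ) :=
        ball_subset_ball (hdist ▸ hρ.trans (infDist_le_dist_of_mem hy))
    _ ⊆ Ω := ball_infDist_compl_subset

theorem UniformCurve.exists_dist_eq_le_infDist {d : ℕ} {Ω : Set (Euc d)} {σ : ℝ}
    {p q : Euc d} (h : UniformCurve d Ω σ p q) {s : ℝ} (hs : 0 ≤ s) (hpq : 2 * s ≤ dist p q) :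
    ∃ w ∈ Ω, dist p w = s ∧ σ⁻¹ * s ≤ infDist w (frontier Ω) := by
  obtain ⟨γ, hγc, hγ0, hγ1, hγΩ, -, hγcone⟩ := h
  have hcont : ContinuousOn (fun t => dist p (γ t)) (Icc 0 1) :=
    (continuous_const.dist continuous_id).comp_continuousOn hγc
  have hmem : s ∈ Icc (dist p (γ 0)) (dist p (γ 1)) := by
    rw [hγ0, hγ1, dist_self]
    constructor <;> linarith
  obtain ⟨t, ht, hpt⟩ := intermediate_value_Icc zero_le_one hcont hmem
  refine ⟨γ t, hγΩ t ht, hpt, ?_⟩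
  have hfar : s ≤ dist (γ t) q := by
    linarith [dist_triangle p (γ t) q]
  simpa [hpt, min_eq_left hfar] using hγcone t ht

theorem exists_ball_subset_inter_ball {d : ℕ} {Ω : Set (Euc d)} {z : Euc d} {R σ : ℝ}
    (hσ : 1 ≤ σ) (hunif : OmegaUniform d Ω σ z R)
    {w₀ : Euc d} (hw₀ : w₀ ∈ Ω ∩ ball z R) {x : Euc d} (hx : x ∈ frontier Ω ∩ ball z (R / 2))
    {r : ℝ} (hr : 0 < r) (hrR : r < R) (hrw₀ : r ≤ dist x w₀) :
    ∃ w, ball w (r / (4 * σ)) ⊆ Ω ∩ ball x r := by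
  obtain ⟨p, hpΩ, hxp⟩ := Metric.mem_closure_iff.1 (frontier_subset_closure hx.1) (r / 4)
    (by positivity)
  have hpz : p ∈ ball z R :=
    mem_ball.2 (by linarith [dist_triangle p x z, dist_comm p x, mem_ball.1 hx.2])
  have hpw₀ : 2 * (r / 4) ≤ dist p w₀ := by
    linarith [dist_triangle x p w₀]
  obtain ⟨w, hwΩ, hpw, hw⟩ := (hunif p ⟨hpΩ, hpz⟩ w₀ hw₀).exists_dist_eq_le_infDist
    (by positivity) hpw₀
  have hσpos : 0 < σ := zero_lt_one.trans_le hσ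
  have hρ : r / (4 * σ) ≤ r / 4 := div_le_div_of_nonneg_left (by positivity) (by positivity)
    (by linarith)
  refine ⟨w, subset_inter (ball_subset_of_le_infDist_frontier hwΩ ?_) fun y hy => ?_⟩
  · calc r / (4 * σ) = σ⁻¹ * (r / 4) := by ring
      _ ≤ infDist w (frontier Ω) := hw
  · rw [mem_ball] at hy ⊢
    linarith [dist_triangle y w x, dist_triangle x p w, dist_comm w x]

theorem stmt_5_general (d : ℕ) (Ω : Set (Euc d)) (hΩopen : IsOpen Ω)
    (z : Euc d) (hz : z ∈ frontier Ω) (R : ℝ) (hR : 0 < R)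
    (σ : ℝ) (hσ : 1 ≤ σ) (hunif : OmegaUniform d Ω σ z R) :
    ∃ b' > (0 : ℝ), ∃ R' > (0 : ℝ), ∀ x ∈ frontier Ω ∩ ball z (R / 2),
      ∀ r : ℝ, 0 < r → r < R' →
        ENNReal.ofReal (b' * r ^ (d : ℝ)) ≤ volume (Ω ∩ ball x r) := by
  obtain ⟨w₀, hw₀Ω, hzw₀⟩ := Metric.mem_closure_iff.1 (frontier_subset_closure hz) R hR
  obtain ⟨ρ₀, hρ₀, hball⟩ := Metric.isOpen_iff.1 hΩopen w₀ hw₀Ω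
  set V := volume (ball (0 : Euc d) 1)
  have hV : 0 < V.toReal := ENNReal.toReal_pos (measure_ball_pos volume 0 one_pos).ne'
    measure_ball_lt_top.ne
  have hσpos : 0 < σ := zero_lt_one.trans_le hσ
  refine ⟨V.toReal * (4 * σ)⁻¹ ^ d, by positivity, min R ρ₀, lt_min hR hρ₀, ?_⟩
  rintro x hx r hr hrR'
  have hρ₀x : ρ₀ ≤ dist x w₀ := by
    by_contra! h
    exact (hΩopen.frontier_eq ▸ hx.1).2 (hball (mem_ball.2 h))
  obtain ⟨w, hw⟩ := exists_ball_subset_inter_ball hσ hunif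
    ⟨hw₀Ω, mem_ball_comm.1 hzw₀⟩ hx hr (hrR'.trans_le (min_le_left _ _))
    ((hrR'.trans_le (min_le_right _ _)).le.trans hρ₀x)
  calc ENNReal.ofReal (V.toReal * (4 * σ)⁻¹ ^ d * r ^ (d : ℝ))
      = volume (ball w (r / (4 * σ))) := by
        rw [Measure.addHaar_ball_of_pos volume w (by positivity), finrank_euclideanSpace_fin,
          Real.rpow_natCast, mul_assoc, ← mul_pow, ENNReal.ofReal_mul ENNReal.toReal_nonneg,
          ENNReal.ofReal_toReal measure_ball_lt_top.ne, mul_comm, inv_mul_eq_div]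
    _ ≤ volume (Ω ∩ ball x r) := measure_mono hw

/-- If `Ω_{z,R}` is `Ω`-uniform then the volume density bound
`|Ω ∩ B(x;r)| ≥ b'·r^d` holds for all `x ∈ Γ ∩ B(z;R/2)` and all small `r > 0`. -/
theorem stmt_5 (d : ℕ) (Ω : Set (Euc d)) (hΩopen : IsOpen Ω) (hΩconn : IsConnected Ω)
    (z : Euc d) (hz : z ∈ frontier Ω) (R : ℝ) (hR : 0 < R)
    (σ : ℝ) (hσ : 1 ≤ σ) (hunif : OmegaUniform d Ω σ z R) :
    ∃ b' > (0 : ℝ), ∃ R' > (0 : ℝ), ∀ x ∈ frontier Ω ∩ ball z (R / 2),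
      ∀ r : ℝ, 0 < r → r < R' →
        ENNReal.ofReal (b' * r ^ (d : ℝ)) ≤ volume (Ω ∩ ball x r) :=
  stmt_5_general d Ω hΩopen z hz R hR σ hσ hunif
end
end

section
/- Let Ω ⊆ ℝ^d be a domain with boundary Γ, z ∈ Γ and ρ > 0. Suppose there are s ∈ (0,d) and c', R' > 0 such that |{x ∈ Ω ∩ B(z;ρ) : d_Γ(x) < τ}| ≥ c'·τ^{d−s} for all τ ∈ (0,R'). If δ is a real number with 0 ≤ δ < 2 + s − d, then there is a > 0 such that ∫_{Ω∩B(z;ρ)} d_Γ(x)^{δ−2} dx ≥ a·τ^{−(2+s−d−δ)} for all τ ∈ (0,R'); in particular ∫_{Ω∩B(z;ρ)} d_Γ(x)^{δ−2} dx = ∞. -/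
open MeasureTheory Metric Set Filter Topology
open scoped ENNReal NNReal

noncomputable section

/-! The sublevel sets `{d_Γ < τ}` carry at least `c'·τ^(d-s)` of mass, and there the weight
`d_Γ^(δ-2)` is at least `τ^(δ-2)`; multiplying gives `c'·τ^(-(2+s-d-δ))`, which blows up as
`τ → 0⁺`. -/

theorem IsOpen.infDist_frontier_pos {E : Type*} [MetricSpace E] {U : Set E} (hU : IsOpen U)
    (hne : (frontier U).Nonempty) {x : E} (hx : x ∈ U) : 0 < infDist x (frontier U) :=
  (isClosed_frontier.notMem_iff_infDist_pos hne).1 fun h => (hU.frontier_eq ▸ h).2 hx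

theorem ofReal_rpow_mul_measure_le_setLIntegral_rpow {α : Type*} [MeasurableSpace α]
    {μ : Measure α} {S : Set α} {f : α → ℝ} {p : ℝ} (τ : ℝ) (hS : MeasurableSet S)
    (hf : Measurable f) (hpos : ∀ x ∈ S, 0 < f x) (hp : p ≤ 0) :
    ENNReal.ofReal (τ ^ p) * μ {x ∈ S | f x < τ} ≤ ∫⁻ x in S, ENNReal.ofReal (f x ^ p) ∂μ := by
  have hsub : {x ∈ S | f x < τ} ⊆ S := sep_subset S _
  rw [← setLIntegral_const]
  calc ∫⁻ _ in {x ∈ S | f x < τ}, ENNReal.ofReal (τ ^ p) ∂μ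
      ≤ ∫⁻ x in {x ∈ S | f x < τ}, ENNReal.ofReal (f x ^ p) ∂μ :=
        setLIntegral_mono' (hS.inter (measurableSet_lt hf measurable_const)) fun x hx =>
          ENNReal.ofReal_le_ofReal (Real.rpow_le_rpow_of_nonpos (hpos x hx.1) hx.2.le hp)
    _ ≤ ∫⁻ x in S, ENNReal.ofReal (f x ^ p) ∂μ := lintegral_mono_set hsub

theorem ENNReal.eq_top_of_forall_ofReal_mul_rpow_neg_le {I : ℝ≥0∞} {a β R : ℝ} (ha : 0 < a)
    (hβ : 0 < β) (hR : 0 < R)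
    (h : ∀ τ : ℝ, 0 < τ → τ < R → ENNReal.ofReal (a * τ ^ (-β)) ≤ I) : I = ⊤ := by
  have hlim : Tendsto (fun τ : ℝ => ENNReal.ofReal (a * τ ^ (-β))) (𝓝[>] 0) (𝓝 ⊤) :=
    ENNReal.tendsto_ofReal_atTop.comp
      ((tendsto_rpow_neg_nhdsGT_zero (neg_neg_of_pos hβ)).const_mul_atTop ha)
  have hev : ∀ᶠ τ in 𝓝[>] (0 : ℝ), ENNReal.ofReal (a * τ ^ (-β)) ≤ I := by
    filter_upwards [Ioo_mem_nhdsGT hR] with τ hτ using h τ hτ.1 hτ.2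
  exact top_le_iff.1 (le_of_tendsto hlim hev)

theorem stmt_15_general (d : ℕ) (Ω : Set (Euc d)) (hΩopen : IsOpen Ω)
    (z : Euc d) (hz : z ∈ frontier Ω) (ρ : ℝ)
    (s : ℝ) (hsd : s < d) (c' R' : ℝ) (hc' : 0 < c') (hR' : 0 < R')
    (hvol : ∀ τ : ℝ, 0 < τ → τ < R' →
      ENNReal.ofReal (c' * τ ^ ((d : ℝ) - s)) ≤
        volume {x ∈ Ω ∩ ball z ρ | infDist x (frontier Ω) < τ})
    (δ : ℝ) (hδ : δ < 2 + s - d) :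
    ∃ a > (0 : ℝ),
      (∀ τ : ℝ, 0 < τ → τ < R' →
        ENNReal.ofReal (a * τ ^ (-(2 + s - d - δ))) ≤
          ∫⁻ x in Ω ∩ ball z ρ, ENNReal.ofReal (infDist x (frontier Ω) ^ (δ - 2))) ∧
      (∫⁻ x in Ω ∩ ball z ρ, ENNReal.ofReal (infDist x (frontier Ω) ^ (δ - 2))) = ⊤ := by
  have hpos : ∀ x ∈ Ω ∩ ball z ρ, 0 < infDist x (frontier Ω) := fun x hx =>
    hΩopen.infDist_frontier_pos ⟨z, hz⟩ hx.1
  have hbound : ∀ τ : ℝ, 0 < τ → τ < R' →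
      ENNReal.ofReal (c' * τ ^ (-(2 + s - d - δ))) ≤
        ∫⁻ x in Ω ∩ ball z ρ, ENNReal.ofReal (infDist x (frontier Ω) ^ (δ - 2)) := by
    intro τ hτ hτR
    calc ENNReal.ofReal (c' * τ ^ (-(2 + s - d - δ)))
        = ENNReal.ofReal (τ ^ (δ - 2)) * ENNReal.ofReal (c' * τ ^ ((d : ℝ) - s)) := by
          rw [← ENNReal.ofReal_mul (Real.rpow_nonneg hτ.le _), mul_left_comm,
            ← Real.rpow_add hτ]
          ring_nf
      _ ≤ ENNReal.ofReal (τ ^ (δ - 2)) *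
            volume {x ∈ Ω ∩ ball z ρ | infDist x (frontier Ω) < τ} := by
          gcongr
          exact hvol τ hτ hτR
      _ ≤ _ := ofReal_rpow_mul_measure_le_setLIntegral_rpow τ
          (hΩopen.inter isOpen_ball).measurableSet (continuous_infDist_pt _).measurable hpos
          (by linarith)
  exact ⟨c', hc', hbound,
    ENNReal.eq_top_of_forall_ofReal_mul_rpow_neg_le hc' (by linarith) hR' hbound⟩

/-- The divergence estimate in the proof of Proposition 3.5: if
`|{x ∈ Ω ∩ B(z;ρ) : d_Γ(x) < τ}| ≥ c'·τ^(d-s)` for all small `τ` and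
`0 ≤ δ < 2 + s - d`, then `∫_{Ω ∩ B(z;ρ)} d_Γ^{δ-2} ≥ a·τ^{-(2+s-d-δ)}` for all small
`τ`; in particular the integral is infinite. -/
theorem stmt_15 (d : ℕ) (Ω : Set (Euc d)) (hΩopen : IsOpen Ω) (hΩconn : IsConnected Ω)
    (z : Euc d) (hz : z ∈ frontier Ω) (ρ : ℝ) (hρ : 0 < ρ)
    (s : ℝ) (hs0 : 0 < s) (hsd : s < d) (c' R' : ℝ) (hc' : 0 < c') (hR' : 0 < R')
    (hvol : ∀ τ : ℝ, 0 < τ → τ < R' →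
      ENNReal.ofReal (c' * τ ^ ((d : ℝ) - s)) ≤
        volume {x ∈ Ω ∩ ball z ρ | infDist x (frontier Ω) < τ})
    (δ : ℝ) (hδ0 : 0 ≤ δ) (hδ : δ < 2 + s - d) :
    ∃ a > (0 : ℝ),
      (∀ τ : ℝ, 0 < τ → τ < R' →
        ENNReal.ofReal (a * τ ^ (-(2 + s - d - δ))) ≤
          ∫⁻ x in Ω ∩ ball z ρ, ENNReal.ofReal (infDist x (frontier Ω) ^ (δ - 2))) ∧
      (∫⁻ x in Ω ∩ ball z ρ, ENNReal.ofReal (infDist x (frontier Ω) ^ (δ - 2))) = ⊤ :=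
  stmt_15_general d Ω hΩopen z hz ρ s hsd c' R' hc' hR' hvol δ hδ
end
end
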